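/- Let n be a natural number, let λ_1 < λ_2 < λ_3 < ⋯ be a strictly increasing sequence of countable ordinals with λ = sup{λ_j : j ∈ ℕ}, and let (B_j, b_j)_{j∈ℕ} be based topological spaces satisfying w_n^{λ_j}(B_j) = {b_j} for every j ∈ ℕ. Then w_n^λ(⋁_{j∈ℕ}(B_j, b_j)) = {x₀}, where x₀ is the wedgepoint of the shrinking wedge ⋁_{j∈ℕ}(B_j, b_j). -/

import Mathlib

open Set Filter Topology

noncomputable section

/-- The unit `n`-sphere in `ℝ^{n+1}`. -/
def Sph (n : ℕ) : Set (EuclideanSpace ℝ (Fin (n + 1))) := Metric.sphere 0 1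

/-- The basepoint `s₀ = (1,0,…,0)` of the `n`-sphere. -/
def sphBase (n : ℕ) : Sph n :=
  ⟨EuclideanSpace.single 0 1, by
    simp [Sph, mem_sphere_iff_norm, EuclideanSpace.norm_single]⟩

/-- A map `S^n → X` is essential if it is not (freely) homotopic to any constant map. -/
def Essential {n : ℕ} {X : Type*} [TopologicalSpace X] (f : C(Sph n, X)) : Prop :=
  ∀ x : X, ¬ f.Homotopic (ContinuousMap.const _ x)

/-- A sequence of maps `S^n → X` converges to `x ∈ X` if every neighborhood of `x`
eventually contains all of their images. -/
def ConvergesTo {n : ℕ} {X : Type*} [TopologicalSpace X] (f : ℕ → C(Sph n, X)) (x : X) : Prop :=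
  ∀ U ∈ 𝓝 x, ∀ᶠ k in atTop, ∀ s, f k s ∈ U

/-- `x` is a `π_n`-wild point of `X`. -/
def IsWildPoint (n : ℕ) {X : Type*} [TopologicalSpace X] (x : X) : Prop :=
  ∃ f : ℕ → C(Sph n, X), (∀ k, Essential (f k)) ∧ (∀ k, f k (sphBase n) = x) ∧ ConvergesTo f x

/-- `x` is a free `π_n`-wild point of `X`. -/
def IsFreeWildPoint (n : ℕ) {X : Type*} [TopologicalSpace X] (x : X) : Prop :=
  ∃ f : ℕ → C(Sph n, X), (∀ k, Essential (f k)) ∧ ConvergesTo f x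

/-- The `π_n`-wild set of a space `X`. -/
def wildSet (n : ℕ) (X : Type*) [TopologicalSpace X] : Set X := {x | IsWildPoint n x}

/-- The free `π_n`-wild set of a space `X`. -/
def freeWildSet (n : ℕ) (X : Type*) [TopologicalSpace X] : Set X := {x | IsFreeWildPoint n x}

/-- The `π_n`-wild set of a subset `S ⊆ X`, computed in the subspace topology,
regarded again as a subset of `X`. -/
def wildSub (n : ℕ) {X : Type*} [TopologicalSpace X] (S : Set X) : Set X :=
  Subtype.val '' wildSet n ↥S

def freeWildSub (n : ℕ) {X : Type*} [TopologicalSpace X] (S : Set X) : Set X :=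
  Subtype.val '' freeWildSet n ↥S

/-- The transfinitely iterated `π_n`-wild sets of `X`. -/
def iterWild (n : ℕ) (X : Type*) [TopologicalSpace X] (κ : Ordinal) : Set X :=
  Ordinal.limitRecOn (motive := fun _ => Set X) κ Set.univ (fun _ ih => wildSub n ih)
    (fun κ _ ih => ⋂ (o : Ordinal) (h : o < κ), ih o h)

/-- The transfinitely iterated free `π_n`-wild sets of `X`. -/
def iterFreeWild (n : ℕ) (X : Type*) [TopologicalSpace X] (κ : Ordinal) : Set X :=
  Ordinal.limitRecOn (motive := fun _ => Set X) κ Set.univ (fun _ ih => freeWildSub n ih)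
    (fun κ _ ih => ⋂ (o : Ordinal) (h : o < κ), ih o h)

/-- The `π_n`-wild rank of `X`: the least ordinal `κ` with `w_n^{κ+1}(X) = w_n^κ(X)`. -/
def wrk (n : ℕ) (X : Type*) [TopologicalSpace X] : Ordinal :=
  sInf {κ | iterWild n X (κ + 1) = iterWild n X κ}

/-- The free `π_n`-wild rank of `X`. -/
def fwrk (n : ℕ) (X : Type*) [TopologicalSpace X] : Ordinal :=
  sInf {κ | iterFreeWild n X (κ + 1) = iterFreeWild n X κ}

/-! ### Shrinking point-attachment spaces -/

/-- The underlying type of the shrinking point-attachment `S(X, A, B)`: the disjoint union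
of `X` and the spaces `B j`, with the basepoint `b j` of each `B j` identified with the
point `a j` of `X`. -/
def SPA (X : Type) [TopologicalSpace X] (a : ℕ → X) (B : ℕ → Type)
    [∀ j, TopologicalSpace (B j)] (b : ∀ j, B j) : Type :=
  X ⊕ (Σ j, {y : B j // y ≠ b j})

variable (X : Type) [TopologicalSpace X] (a : ℕ → X) (B : ℕ → Type)
  [∀ j, TopologicalSpace (B j)] (b : ∀ j, B j)

/-- The canonical inclusion of `X` into `S(X, A, B)`. -/
def SPA.ofBase (x : X) : SPA X a B b := Sum.inl x

open Classical in
/-- The canonical inclusion of `B j` into `S(X, A, B)` (sending `b j` to `a j`). -/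
noncomputable def SPA.incl (j : ℕ) (y : B j) : SPA X a B b :=
  if h : y = b j then Sum.inl (a j) else Sum.inr ⟨j, ⟨y, h⟩⟩

/-- The open-set predicate of the shrinking point-attachment topology: `U` is open iff its
trace on `X` is open, its trace on each `B j` is open, and whenever `x ∈ U ∩ X` and
`a_{j₁}, a_{j₂}, …` (with `j₁ < j₂ < ⋯`) converges to `x` in `X`, then `B_{jᵢ} ⊆ U` for all
but finitely many `i`. -/
def SPA.IsOpenPred (U : Set (SPA X a B b)) : Prop :=
  IsOpen (SPA.ofBase X a B b ⁻¹' U) ∧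
  (∀ j, IsOpen (SPA.incl X a B b j ⁻¹' U)) ∧
  (∀ x : X, SPA.ofBase X a B b x ∈ U →
    ∀ js : ℕ → ℕ, StrictMono js →
      Filter.Tendsto (fun i => a (js i)) Filter.atTop (𝓝 x) →
      ∀ᶠ i in Filter.atTop, ∀ y : B (js i), SPA.incl X a B b (js i) y ∈ U)

/-- The shrinking point-attachment topology on `S(X, A, B)`. -/
noncomputable instance SPA.topologicalSpace : TopologicalSpace (SPA X a B b) where
  IsOpen U := SPA.IsOpenPred X a B b U
  isOpen_univ := by
    refine ⟨isOpen_univ, fun j => isOpen_univ, fun x _ js _ _ => ?_⟩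
    exact Filter.Eventually.of_forall fun i y => Set.mem_univ _
  isOpen_inter := by
    rintro U V ⟨hU1, hU2, hU3⟩ ⟨hV1, hV2, hV3⟩
    refine ⟨?_, fun j => ?_, fun x hx js hjs hconv => ?_⟩
    · rw [Set.preimage_inter]; exact hU1.inter hV1
    · rw [Set.preimage_inter]; exact (hU2 j).inter (hV2 j)
    · filter_upwards [hU3 x hx.1 js hjs hconv, hV3 x hx.2 js hjs hconv] with i h1 h2 y
      exact ⟨h1 y, h2 y⟩
  isOpen_sUnion := by
    intro S hS
    refine ⟨?_, fun j => ?_, fun x hx js hjs hconv => ?_⟩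
    · rw [Set.preimage_sUnion]; exact isOpen_biUnion fun U hU => (hS U hU).1
    · rw [Set.preimage_sUnion]; exact isOpen_biUnion fun U hU => (hS U hU).2.1 j
    · obtain ⟨U, hUS, hxU⟩ := hx
      filter_upwards [(hS U hUS).2.2 x hxU js hjs hconv] with i h y
      exact Set.mem_sUnion.2 ⟨U, hUS, h y⟩

/-- The shrinking wedge `⋁_j (B_j, b_j)`: the shrinking point-attachment over a one-point
space, all basepoints being identified to a single wedgepoint. -/
def ShrinkWedge (B : ℕ → Type) [∀ j, TopologicalSpace (B j)] (b : ∀ j, B j) : Type :=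
  SPA PUnit (fun _ => PUnit.unit) B b

/-- The wedgepoint of the shrinking wedge. -/
def ShrinkWedge.pt (B : ℕ → Type) [∀ j, TopologicalSpace (B j)] (b : ∀ j, B j) :
    ShrinkWedge B b :=
  SPA.ofBase PUnit (fun _ => PUnit.unit) B b PUnit.unit

noncomputable instance (B : ℕ → Type) [∀ j, TopologicalSpace (B j)] (b : ∀ j, B j) :
    TopologicalSpace (ShrinkWedge B b) :=
  SPA.topologicalSpace PUnit (fun _ => PUnit.unit) B b

variable {n : ℕ}

/-- Transfer of wild points along a map with a left inverse. -/
lemma isWildPoint_map {Z₁ Z₂ : Type*} [TopologicalSpace Z₁] [TopologicalSpace Z₂]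
    (u : C(Z₁, Z₂)) (v : C(Z₂, Z₁)) (hvu : ∀ z, v (u z) = z) {z : Z₁}
    (hz : IsWildPoint n z) : IsWildPoint n (u z) := by
  obtain ⟨f, hess, hbase, hconv⟩ := hz
  refine ⟨fun k => u.comp (f k), fun k x hx => ?_, fun k => by simp [hbase k], ?_⟩
  · have h2 := ContinuousMap.Homotopic.comp (ContinuousMap.Homotopic.refl v) hx
    have e1 : v.comp (u.comp (f k)) = f k := ContinuousMap.ext fun s => hvu _
    have e2 : v.comp (ContinuousMap.const (Sph n) x) = ContinuousMap.const (Sph n) (v x) :=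
      ContinuousMap.ext fun s => rfl
    rw [e1, e2] at h2
    exact hess k (v x) h2
  · intro U hU
    have hp : u ⁻¹' U ∈ 𝓝 z := u.continuous.continuousAt.preimage_mem_nhds hU
    filter_upwards [hconv _ hp] with k hk s using hk s

/-- Transfer of wild points backwards along a retraction which is a local
two-sided inverse near the point. -/
lemma isWildPoint_map_back {Z₁ Z₂ : Type*} [TopologicalSpace Z₁] [TopologicalSpace Z₂]
    (u : C(Z₁, Z₂)) (v : C(Z₂, Z₁)) {z : Z₂} (hz : IsWildPoint n z)
    (A : Set Z₂) (hA : A ∈ 𝓝 z) (hA2 : ∀ w ∈ A, u (v w) = w) :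
    IsWildPoint n (v z) := by
  obtain ⟨f, hess, hbase, hconv⟩ := hz
  obtain ⟨K, hK⟩ := eventually_atTop.mp (hconv A hA)
  refine ⟨fun k => v.comp (f (K + k)), fun k x hx => ?_, fun k => by simp [hbase], ?_⟩
  · have h2 := ContinuousMap.Homotopic.comp (ContinuousMap.Homotopic.refl u) hx
    have e1 : u.comp (v.comp (f (K + k))) = f (K + k) :=
      ContinuousMap.ext fun s => hA2 _ (hK (K + k) (Nat.le_add_right K k) s)
    have e2 : u.comp (ContinuousMap.const (Sph n) x) = ContinuousMap.const (Sph n) (u x) :=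
      ContinuousMap.ext fun s => rfl
    rw [e1, e2] at h2
    exact hess (K + k) (u x) h2
  · intro U hU
    have hp : v ⁻¹' U ∈ 𝓝 z := v.continuous.continuousAt.preimage_mem_nhds hU
    obtain ⟨M, hM⟩ := eventually_atTop.mp (hconv _ hp)
    exact eventually_atTop.mpr ⟨M, fun k hk s => hM (K + k) (le_trans hk (Nat.le_add_left k K)) s⟩

/-- Moving the basepoint of a map to a point `y` all of whose neighborhoods
contain the old basepoint's value, up to homotopy. -/
lemma exists_basepoint_shift {Z : Type*} [TopologicalSpace Z] (g : C(Sph n, Z)) (y : Z)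
    (key : ∀ O : Set Z, IsOpen O → y ∈ O → g (sphBase n) ∈ O) :
    ∃ g' : C(Sph n, Z), g' (sphBase n) = y ∧ g.Homotopic g' ∧ ∀ s, g' s = y ∨ g' s = g s := by
  classical
  have hne : ((0 : unitInterval) = (1 : unitInterval)) = False := by
    simp only [eq_iff_iff, iff_false]
    intro h
    exact zero_ne_one (α := ℝ) (congrArg Subtype.val h)
  set Hfun : unitInterval × Sph n → Z :=
    fun p => if p.2 = sphBase n ∧ p.1 = 1 then y else g p.2 with hHfun
  have hcont : Continuous Hfun := by
    rw [continuous_def]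
    intro O hO
    by_cases hy : y ∈ O
    · have hgO : g (sphBase n) ∈ O := key O hO hy
      have : Hfun ⁻¹' O = {p : unitInterval × Sph n | g p.2 ∈ O} := by
        ext p
        by_cases hp : p.2 = sphBase n ∧ p.1 = 1
        · simp [Hfun, hp, hy, hp.1, hgO]
        · simp [Hfun, hp]
      rw [this]
      exact hO.preimage (g.continuous.comp continuous_snd)
    · have : Hfun ⁻¹' O =
          {p : unitInterval × Sph n | g p.2 ∈ O} \ {((1 : unitInterval), sphBase n)} := by
        ext p
        by_cases hp : p.2 = sphBase n ∧ p.1 = 1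
        · have : p = ((1 : unitInterval), sphBase n) := Prod.ext hp.2 hp.1
          simp [Hfun, hp, hy, this]
        · have : p ≠ ((1 : unitInterval), sphBase n) := by
            intro h; exact hp ⟨by rw [h], by rw [h]⟩
          simp [Hfun, hp, this]
      rw [this]
      exact (hO.preimage (g.continuous.comp continuous_snd)).sdiff isClosed_singleton
  set g' : C(Sph n, Z) := ⟨fun s => Hfun (1, s), hcont.comp (Continuous.prodMk_right 1)⟩ with hg'
  refine ⟨g', by simp [g', Hfun], ⟨⟨⟨Hfun, hcont⟩, ?_, fun s => rfl⟩⟩, fun s => ?_⟩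
  · intro s
    simp only [Hfun, ContinuousMap.coe_mk, hne, and_false, if_false]
  · by_cases hs : s = sphBase n
    · left; simp [g', Hfun, hs]
    · right; simp [g', Hfun, hs]

/-- Wildness passes to specializations: if every neighborhood of `y` contains `c`. -/
lemma isWildPoint_specializes {Z : Type*} [TopologicalSpace Z] {c y : Z}
    (hcl : y ∈ closure {c}) (hc : IsWildPoint n c) : IsWildPoint n y := by
  have key : ∀ O : Set Z, IsOpen O → y ∈ O → c ∈ O := by
    intro O hO hy
    obtain ⟨z, hzO, hzc⟩ := mem_closure_iff.mp hcl O hO hy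
    rwa [mem_singleton_iff.mp hzc] at hzO
  obtain ⟨f, hess, hbase, hconv⟩ := hc
  have hsel : ∀ k, ∃ g' : C(Sph n, Z),
      g' (sphBase n) = y ∧ (f k).Homotopic g' ∧ ∀ s, g' s = y ∨ g' s = f k s := by
    intro k
    exact exists_basepoint_shift (f k) y (fun O hO hy => (hbase k) ▸ key O hO hy)
  choose g hgb hgh hgv using hsel
  refine ⟨g, fun k x hx => hess k x (((hgh k)).trans hx), hgb, ?_⟩
  intro U hU
  obtain ⟨O, hOU, hO, hyO⟩ := mem_nhds_iff.mp hU
  have hcO : O ∈ 𝓝 c := hO.mem_nhds (key O hO hyO)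
  filter_upwards [hconv O hcO] with k hk s
  rcases hgv k s with h | h
  · rw [h]; exact hOU hyO
  · rw [h]; exact hOU (hk s)


lemma wildSub_subset {X : Type*} [TopologicalSpace X] (S : Set X) : wildSub n S ⊆ S := by
  rintro x ⟨⟨x, hx⟩, -, rfl⟩; exact hx

lemma iterWild_zero (X : Type*) [TopologicalSpace X] : iterWild n X 0 = Set.univ :=
  Ordinal.limitRecOn_zero ..

lemma iterWild_succ (X : Type*) [TopologicalSpace X] (κ : Ordinal) :
    iterWild n X (Order.succ κ) = wildSub n (iterWild n X κ) :=
  Ordinal.limitRecOn_succ ..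

lemma iterWild_limit (X : Type*) [TopologicalSpace X] {κ : Ordinal} (h : Order.IsSuccLimit κ) :
    iterWild n X κ = ⋂ (o : Ordinal) (_ : o < κ), iterWild n X o :=
  Ordinal.limitRecOn_limit _ _ _ _ h

lemma iterWild_antitone (X : Type*) [TopologicalSpace X] :
    ∀ {κ μ : Ordinal}, μ ≤ κ → iterWild n X κ ⊆ iterWild n X μ := by
  intro κ
  induction κ using Ordinal.induction with
  | _ κ IH =>
    intro μ hμ
    rcases eq_or_lt_of_le hμ with rfl | hlt
    · exact subset_rfl
    rcases Ordinal.zero_or_succ_or_isSuccLimit κ with rfl | ⟨ν, rfl⟩ | hlim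
    · exact absurd hlt (by simp)
    · rw [iterWild_succ]
      exact (wildSub_subset _).trans (IH ν (Order.lt_succ ν) (Order.lt_succ_iff.mp hlt))
    · rw [iterWild_limit X hlim]
      exact iInter₂_subset μ hlt

lemma iterWild_specializes {X : Type*} [TopologicalSpace X] (κ : Ordinal) :
    ∀ {c y : X}, y ∈ closure {c} → c ∈ iterWild n X κ → y ∈ iterWild n X κ := by
  induction κ using Ordinal.induction with
  | _ κ IH =>
  rcases Ordinal.zero_or_succ_or_isSuccLimit κ with rfl | ⟨ν, rfl⟩ | hlim
  · intro c y _ _; rw [iterWild_zero]; exact mem_univ y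
  · intro c y hcl hc
    rw [iterWild_succ] at hc ⊢
    have hcS : c ∈ iterWild n X ν := wildSub_subset _ hc
    have hyS : y ∈ iterWild n X ν := IH ν (Order.lt_succ ν) hcl hcS
    obtain ⟨chn, hw, hv⟩ := hc
    refine ⟨⟨y, hyS⟩, isWildPoint_specializes ?_ hw, rfl⟩
    rw [mem_closure_iff]
    intro O hO hyO
    obtain ⟨O', hO', rfl⟩ := isOpen_induced_iff.mp hO
    have hcO' : c ∈ O' := by
      obtain ⟨z, hzO, hzc⟩ := mem_closure_iff.mp hcl O' hO' hyO
      rwa [mem_singleton_iff.mp hzc] at hzO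
    exact ⟨chn, by simpa [hv] using hcO', rfl⟩
  · intro c y hcl hc
    rw [iterWild_limit X hlim] at hc ⊢
    exact mem_iInter₂.mpr fun o ho => IH o ho hcl (mem_iInter₂.mp hc o ho)

section Wedge

variable {C : ℕ → Type} [∀ j, TopologicalSpace (C j)] {c : ∀ j, C j}

/-- Inclusion of a summand into the shrinking wedge. -/
def winc (j : ℕ) (y : C j) : ShrinkWedge C c := SPA.incl PUnit (fun _ => PUnit.unit) C c j y

/-- Retraction of the shrinking wedge onto a summand. -/
def wret (j : ℕ) : ShrinkWedge C c → C j :=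
  Sum.elim (fun _ => c j) (fun p => if h : p.1 = j then h ▸ p.2.val else c j)

lemma winc_eq_pt (j : ℕ) : winc (c := c) j (c j) = ShrinkWedge.pt C c := dif_pos rfl

lemma winc_of_ne {j : ℕ} {y : C j} (h : y ≠ c j) :
    winc (c := c) j y = Sum.inr ⟨j, ⟨y, h⟩⟩ := dif_neg h

lemma winc_ne_pt {j : ℕ} {y : C j} (h : y ≠ c j) :
    winc (c := c) j y ≠ ShrinkWedge.pt C c := by
  rw [winc_of_ne h]
  exact fun hh => Sum.inr_ne_inl hh

lemma wret_winc_self (j : ℕ) (y : C j) : wret j (winc (c := c) j y) = y := by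
  by_cases h : y = c j
  · subst h; rw [winc_eq_pt]; rfl
  · rw [winc_of_ne h]; simp [wret]

lemma wret_winc_ne {j m : ℕ} (h : m ≠ j) (y : C m) : wret j (winc (c := c) m y) = c j := by
  by_cases hy : y = c m
  · subst hy; rw [winc_eq_pt]; rfl
  · rw [winc_of_ne hy]; simp [wret, h]

lemma wret_pt (j : ℕ) : wret j (ShrinkWedge.pt C c) = c j := rfl

lemma winc_inj {j : ℕ} {y y' : C j} (h : winc (c := c) j y = winc (c := c) j y') : y = y' := by
  have := congrArg (wret j) h
  rwa [wret_winc_self, wret_winc_self] at this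

lemma winc_cross {j m : ℕ} (hjm : m ≠ j) {y : C j} {y' : C m}
    (h : winc (c := c) j y = winc (c := c) m y') : y = c j := by
  have := congrArg (wret j) h
  rwa [wret_winc_self, wret_winc_ne hjm] at this

lemma isOpen_wedge_iff {U : Set (ShrinkWedge C c)} :
    IsOpen U ↔ SPA.IsOpenPred PUnit (fun _ => PUnit.unit) C c U := Iff.rfl

lemma isOpen_punit (s : Set PUnit) : IsOpen s := by
  rcases s.eq_empty_or_nonempty with rfl | ⟨x, hx⟩
  · exact isOpen_empty
  · have : s = univ := eq_univ_of_forall fun u => by cases u; cases x; exact hx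
    rw [this]; exact isOpen_univ

lemma continuous_winc (j : ℕ) : Continuous (winc (c := c) j) :=
  continuous_def.mpr fun U hU => (isOpen_wedge_iff.mp hU).2.1 j

lemma continuous_wret (j : ℕ) : Continuous (wret (c := c) j) := by
  rw [continuous_def]
  intro V hV
  rw [isOpen_wedge_iff]
  refine ⟨isOpen_punit _, fun m => ?_, fun x hx js hjs _ => ?_⟩
  · by_cases hm : m = j
    · subst hm
      have : SPA.incl PUnit (fun _ => PUnit.unit) C c m ⁻¹' (wret m ⁻¹' V) = V := by
        ext y
        simp only [mem_preimage]
        rw [show SPA.incl PUnit (fun _ => PUnit.unit) C c m y = winc (c := c) m y from rfl]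
        show wret m (winc (c := c) m y) ∈ V ↔ y ∈ V
        rw [wret_winc_self]
      exact (congrArg IsOpen this).mpr hV
    · by_cases hcV : c j ∈ V
      · have : SPA.incl PUnit (fun _ => PUnit.unit) C c m ⁻¹' (wret j ⁻¹' V) = univ := by
          refine eq_univ_of_forall fun y => ?_
          simp only [mem_preimage]
          rw [show SPA.incl PUnit (fun _ => PUnit.unit) C c m y = winc (c := c) m y from rfl]
          show wret j (winc (c := c) m y) ∈ V
          rw [wret_winc_ne hm]
          exact hcV
        exact (congrArg IsOpen this).mpr isOpen_univ
      · have : SPA.incl PUnit (fun _ => PUnit.unit) C c m ⁻¹' (wret j ⁻¹' V) = ∅ := by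
          refine eq_empty_iff_forall_notMem.mpr fun y hy => hcV ?_
          simp only [mem_preimage] at hy
          have hy' : wret j (winc (c := c) m y) ∈ V := hy
          rwa [wret_winc_ne hm] at hy'
        exact (congrArg IsOpen this).mpr isOpen_empty
  · have hcV : c j ∈ V := hx
    have hev : ∀ᶠ i in atTop, js i ≠ j := by
      refine eventually_atTop.mpr ⟨j + 1, fun i hi hij => ?_⟩
      have := hjs.le_apply (x := i)
      omega
    filter_upwards [hev] with i hi y
    show wret j (winc (c := c) (js i) y) ∈ V
    rw [wret_winc_ne hi]
    exact hcV

lemma isOpen_winc_image {j : ℕ} {O : Set (C j)} (hO : IsOpen O) (hc : c j ∉ O) :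
    IsOpen (winc (c := c) j '' O) := by
  rw [isOpen_wedge_iff]
  refine ⟨isOpen_punit _, fun m => ?_, fun x hx js hjs _ => ?_⟩
  · by_cases hm : m = j
    · subst hm
      have : SPA.incl PUnit (fun _ => PUnit.unit) C c m ⁻¹' (winc (c := c) m '' O) = O := by
        ext y
        simp only [mem_preimage]
        constructor
        · rintro ⟨y', hy', hh⟩
          have he : y' = y :=
            winc_inj (show winc (c := c) m y' = winc (c := c) m y from hh)
          exact he ▸ hy'
        · intro hy
          exact ⟨y, hy, rfl⟩
      exact (congrArg IsOpen this).mpr hO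
    · have : SPA.incl PUnit (fun _ => PUnit.unit) C c m ⁻¹' (winc (c := c) j '' O) = ∅ := by
        refine eq_empty_iff_forall_notMem.mpr fun y hy => ?_
        simp only [mem_preimage] at hy
        obtain ⟨y', hy', hh⟩ := hy
        have : y' = c j :=
          winc_cross hm (show winc (c := c) j y' = winc (c := c) m y from hh)
        exact hc (this ▸ hy')
      exact (congrArg IsOpen this).mpr isOpen_empty
  · exfalso
    obtain ⟨y', hy', hh⟩ := hx
    cases x
    have : y' = c j := by
      by_contra hne
      rw [winc_of_ne hne] at hh
      exact Sum.inr_ne_inl hh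
    exact hc (this ▸ hy')

lemma eventually_summand_mem {V : Set (ShrinkWedge C c)} (hV : IsOpen V)
    (hpt : ShrinkWedge.pt C c ∈ V) :
    ∀ᶠ m in atTop, ∀ y : C m, winc (c := c) m y ∈ V := by
  have h3 := (isOpen_wedge_iff.mp hV).2.2 PUnit.unit hpt id strictMono_id
    (tendsto_const_nhds)
  exact h3

end Wedge

section Main

variable {n : ℕ} {C : ℕ → Type} [∀ j, TopologicalSpace (C j)] {c : ∀ j, C j}

/-- Candidate description of the iterated wild sets of the shrinking wedge. -/
def Rset (n : ℕ) (C : ℕ → Type) [∀ j, TopologicalSpace (C j)] (c : ∀ j, C j) (κ : Ordinal) :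
    Set (ShrinkWedge C c) :=
  {ShrinkWedge.pt C c} ∪ ⋃ j, winc (c := c) j '' (iterWild n (C j) κ \ {c j})

lemma pt_mem_Rset (κ : Ordinal) : ShrinkWedge.pt C c ∈ Rset n C c κ := Or.inl rfl

lemma winc_mem_Rset_iff {j : ℕ} {y : C j} (hy : y ≠ c j) (κ : Ordinal) :
    winc (c := c) j y ∈ Rset n C c κ ↔ y ∈ iterWild n (C j) κ := by
  constructor
  · rintro (h | h)
    · exact absurd (mem_singleton_iff.mp h) (winc_ne_pt hy)
    · simp only [mem_iUnion, mem_image, mem_diff, mem_singleton_iff] at h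
      obtain ⟨m, y', ⟨hy'T, hy'c⟩, hh⟩ := h
      by_cases hm : m = j
      · subst hm
        rwa [winc_inj hh] at hy'T
      · exact absurd (winc_cross hm hh.symm) hy
  · intro h
    exact Or.inr (mem_iUnion.mpr ⟨j, mem_image_of_mem _ ⟨h, hy⟩⟩)

lemma wedge_cases (z : ShrinkWedge C c) :
    z = ShrinkWedge.pt C c ∨ ∃ j y, y ≠ c j ∧ z = winc (c := c) j y := by
  rcases z with u | ⟨m, y, hy⟩
  · cases u; exact Or.inl rfl
  · exact Or.inr ⟨m, y, hy, (winc_of_ne hy).symm⟩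

/-- Summand inclusion at the subtype level. -/
def wincS (j : ℕ) (S : Set (ShrinkWedge C c)) (T : Set (C j))
    (h : ∀ y ∈ T, winc (c := c) j y ∈ S) : C(↥T, ↥S) :=
  ⟨fun w => ⟨winc (c := c) j w.val, h _ w.2⟩,
    ((continuous_winc j).comp continuous_subtype_val).subtype_mk _⟩

/-- Summand retraction at the subtype level. -/
def wretS (j : ℕ) (S : Set (ShrinkWedge C c)) (T : Set (C j))
    (h : ∀ z ∈ S, wret j z ∈ T) : C(↥S, ↥T) :=
  ⟨fun w => ⟨wret j w.val, h _ w.2⟩,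
    ((continuous_wret j).comp continuous_subtype_val).subtype_mk _⟩

theorem wedge_invariant (ls : ℕ → Ordinal) (hmono : StrictMono ls) (l : Ordinal)
    (hl : l = ⨆ j, ls j) (hC : ∀ j, iterWild n (C j) (ls j) = {c j}) :
    ∀ κ, κ ≤ l → iterWild n (ShrinkWedge C c) κ = Rset n C c κ := by
  have hex : ∀ o, o < l → ∃ j, o < ls j := by
    intro o ho
    rw [hl] at ho
    exact Ordinal.lt_iSup_iff.mp ho
  have hcmem : ∀ j, ∀ κ, κ ≤ ls j → c j ∈ iterWild n (C j) κ := by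
    intro j κ hκ
    have h0 : c j ∈ iterWild n (C j) (ls j) := by rw [hC j]; exact rfl
    exact iterWild_antitone (C j) hκ h0
  have hclosed : ∀ j : ℕ, IsClosed ({c j} : Set (C j)) := by
    intro j
    refine isClosed_of_closure_subset fun y hy => ?_
    have := iterWild_specializes (ls j) hy (hcmem j (ls j) le_rfl)
    rwa [hC j] at this
  intro κ
  induction κ using Ordinal.induction with
  | _ κ IH =>
  intro hκl
  rcases Ordinal.zero_or_succ_or_isSuccLimit κ with rfl | ⟨ν, rfl⟩ | hlim
  · -- zero case
    rw [iterWild_zero]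
    symm
    rw [eq_univ_iff_forall]
    intro z
    rcases wedge_cases z with rfl | ⟨j, y, hyc, rfl⟩
    · exact pt_mem_Rset 0
    · refine (winc_mem_Rset_iff hyc 0).mpr ?_
      rw [iterWild_zero]
      exact mem_univ y
  · -- successor case
    have hνl : ν < l := lt_of_lt_of_le (Order.lt_succ ν) hκl
    have hSR := IH ν (Order.lt_succ ν) hνl.le
    rw [iterWild_succ]
    set S := iterWild n (ShrinkWedge C c) ν with hSdef
    have hptS : ShrinkWedge.pt C c ∈ S := by rw [hSR]; exact pt_mem_Rset ν
    have hmemS : ∀ j, ∀ y ∈ iterWild n (C j) ν, winc (c := c) j y ∈ S := by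
      intro j y hy
      rw [hSR]
      by_cases hyc : y = c j
      · subst hyc; rw [winc_eq_pt]; exact pt_mem_Rset ν
      · exact (winc_mem_Rset_iff hyc ν).mpr hy
    have hretS : ∀ j, c j ∈ iterWild n (C j) ν →
        ∀ z ∈ S, wret j z ∈ iterWild n (C j) ν := by
      intro j hj z hz
      rw [hSR] at hz
      rcases hz with hz | hz
      · rw [mem_singleton_iff.mp hz, wret_pt]; exact hj
      · simp only [mem_iUnion, mem_image, mem_diff, mem_singleton_iff] at hz
        obtain ⟨m, y, ⟨hyT, hyc⟩, rfl⟩ := hz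
        by_cases hm : m = j
        · subst hm; rw [wret_winc_self]; exact hyT
        · rw [wret_winc_ne hm]; exact hj
    apply Subset.antisymm
    · -- wildSub S ⊆ Rset (succ ν)
      intro z hz
      have hzS : z ∈ S := wildSub_subset _ hz
      rw [hSR] at hzS
      rcases hzS with hzp | hzs
      · exact Or.inl hzp
      · simp only [mem_iUnion, mem_image, mem_diff, mem_singleton_iff] at hzs
        obtain ⟨j, y, ⟨hyT, hyc⟩, rfl⟩ := hzs
        have hνls : ν ≤ ls j := by
          by_contra hcon
          push_neg at hcon
          have hmem2 : y ∈ iterWild n (C j) (ls j) := iterWild_antitone (C j) hcon.le hyT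
          rw [hC j] at hmem2
          exact hyc (mem_singleton_iff.mp hmem2)
        have hj : c j ∈ iterWild n (C j) ν := hcmem j ν hνls
        obtain ⟨zz, hzzw, hzzv⟩ := hz
        set u := wincS j S _ (hmemS j) with hu
        set v := wretS j S _ (hretS j hj) with hv
        have hA : (Subtype.val ⁻¹' (winc (c := c) j '' ({c j}ᶜ)) : Set ↥S) ∈ 𝓝 zz := by
          refine IsOpen.mem_nhds
            ((isOpen_winc_image (hclosed j).isOpen_compl (fun h => h rfl)).preimage
              continuous_subtype_val) ?_
          show zz.val ∈ winc (c := c) j '' ({c j}ᶜ)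
          rw [hzzv]
          exact ⟨y, hyc, rfl⟩
        have hA2 : ∀ w ∈ (Subtype.val ⁻¹' (winc (c := c) j '' ({c j}ᶜ)) : Set ↥S),
            u (v w) = w := by
          intro w hw
          obtain ⟨y', hy', heq⟩ := hw
          refine Subtype.ext ?_
          show winc (c := c) j (wret j w.val) = w.val
          rw [← heq, wret_winc_self]
        have hw := isWildPoint_map_back u v hzzw _ hA hA2
        have hvz : v zz = ⟨y, hyT⟩ := by
          refine Subtype.ext ?_
          show wret j zz.val = y
          rw [hzzv, wret_winc_self]
        rw [hvz] at hw
        refine Or.inr (mem_iUnion.mpr ⟨j, mem_image_of_mem _ ⟨?_, hyc⟩⟩)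
        rw [iterWild_succ]
        exact ⟨⟨y, hyT⟩, hw, rfl⟩
    · -- Rset (succ ν) ⊆ wildSub S
      intro z hz
      rcases hz with hzp | hzs
      · -- the wedge point is wild
        rw [mem_singleton_iff.mp hzp]
        obtain ⟨j₀, hj₀⟩ := hex ν hνl
        have hkey : ∀ k : ℕ, ∃ g : C(Sph n, ↥S), Essential g ∧
            g (sphBase n) = ⟨ShrinkWedge.pt C c, hptS⟩ ∧
            ∀ s, ∃ y : C (j₀ + k), (g s).val = winc (c := c) (j₀ + k) y := by
          intro k
          set j := j₀ + k with hj_def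
          have hjls : ν < ls j := lt_of_lt_of_le hj₀ (hmono.monotone (Nat.le_add_right j₀ k))
          have hj : c j ∈ iterWild n (C j) ν := hcmem j ν hjls.le
          have hsucc : c j ∈ iterWild n (C j) (Order.succ ν) :=
            hcmem j (Order.succ ν) (Order.succ_le_of_lt hjls)
          rw [iterWild_succ] at hsucc
          obtain ⟨cc, hccw, hccv⟩ := hsucc
          obtain ⟨gs, hgsE, hgsB, -⟩ := hccw
          set u := wincS j S _ (hmemS j) with hu
          set v := wretS j S _ (hretS j hj) with hv
          refine ⟨u.comp (gs 0), ?_, ?_, fun s => ⟨(gs 0 s).val, rfl⟩⟩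
          · intro x hx
            have h2 := ContinuousMap.Homotopic.comp (ContinuousMap.Homotopic.refl v) hx
            have e1 : v.comp (u.comp (gs 0)) = gs 0 := by
              refine ContinuousMap.ext fun s => Subtype.ext ?_
              show wret j (winc (c := c) j ((gs 0 s).val)) = ((gs 0 s)).val
              rw [wret_winc_self]
            have e2 : v.comp (ContinuousMap.const (Sph n) x) =
                ContinuousMap.const (Sph n) (v x) := ContinuousMap.ext fun s => rfl
            rw [e1, e2] at h2
            exact hgsE 0 (v x) h2
          · show u (gs 0 (sphBase n)) = _
            rw [hgsB 0]
            refine Subtype.ext ?_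
            show winc (c := c) j (cc.val) = ShrinkWedge.pt C c
            rw [hccv, winc_eq_pt]
        choose g hgE hgB hgIm using hkey
        refine ⟨⟨ShrinkWedge.pt C c, hptS⟩, ⟨g, hgE, hgB, ?_⟩, rfl⟩
        intro U hU
        rw [nhds_subtype_eq_comap] at hU
        obtain ⟨V', hV', hsub⟩ := mem_comap.mp hU
        obtain ⟨V, hVsub, hVopen, hVpt⟩ := mem_nhds_iff.mp hV'
        obtain ⟨M, hM⟩ := eventually_atTop.mp (eventually_summand_mem hVopen hVpt)
        refine eventually_atTop.mpr ⟨M, fun k hk s => ?_⟩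
        apply hsub
        show (g k s).val ∈ V'
        obtain ⟨y, hy⟩ := hgIm k s
        rw [hy]
        exact hVsub (hM (j₀ + k) (le_trans hk (Nat.le_add_left k j₀)) y)
      · -- points of the summands
        simp only [mem_iUnion, mem_image, mem_diff, mem_singleton_iff] at hzs
        obtain ⟨j, y, ⟨hyT1, hyc⟩, rfl⟩ := hzs
        have hyT : y ∈ iterWild n (C j) ν :=
          iterWild_antitone (C j) (Order.le_succ ν) hyT1
        have hνls : ν ≤ ls j := by
          by_contra hcon
          push_neg at hcon
          have hmem2 : y ∈ iterWild n (C j) (ls j) := iterWild_antitone (C j) hcon.le hyT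
          rw [hC j] at hmem2
          exact hyc (mem_singleton_iff.mp hmem2)
        have hj : c j ∈ iterWild n (C j) ν := hcmem j ν hνls
        rw [iterWild_succ] at hyT1
        obtain ⟨yy, hyyw, hyyv⟩ := hyT1
        set u := wincS j S _ (hmemS j) with hu
        set v := wretS j S _ (hretS j hj) with hv
        have hvu : ∀ w, v (u w) = w := by
          intro w
          refine Subtype.ext ?_
          show wret j (winc (c := c) j w.val) = w.val
          rw [wret_winc_self]
        have hw := isWildPoint_map u v hvu hyyw
        refine ⟨u yy, hw, ?_⟩
        show winc (c := c) j yy.val = winc (c := c) j y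
        rw [hyyv]
  · -- limit case
    have hIH : ∀ o, o < κ → iterWild n (ShrinkWedge C c) o = Rset n C c o :=
      fun o ho => IH o ho (ho.le.trans hκl)
    rw [iterWild_limit _ hlim]
    ext z
    rcases wedge_cases z with rfl | ⟨j, y, hyc, rfl⟩
    · constructor
      · intro _; exact pt_mem_Rset κ
      · intro _
        exact mem_iInter₂.mpr fun o ho => by rw [hIH o ho]; exact pt_mem_Rset o
    · constructor
      · intro hz
        have hmem : ∀ o, o < κ → y ∈ iterWild n (C j) o := by
          intro o ho
          have hz' := mem_iInter₂.mp hz o ho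
          rw [hIH o ho] at hz'
          exact (winc_mem_Rset_iff hyc o).mp hz'
        refine (winc_mem_Rset_iff hyc κ).mpr ?_
        rw [iterWild_limit _ hlim]
        exact mem_iInter₂.mpr hmem
      · intro hz
        have hy := (winc_mem_Rset_iff hyc κ).mp hz
        exact mem_iInter₂.mpr fun o ho => by
          rw [hIH o ho]
          exact (winc_mem_Rset_iff hyc o).mpr (iterWild_antitone (C j) ho.le hy)

end Main

/-- If `λ₁ < λ₂ < ⋯` are countable ordinals with supremum `λ` and
`w_n^{λ_j}(B_j) = {b_j}` for all `j`, then `w_n^λ(⋁_j (B_j, b_j)) = {x₀}`, where `x₀` is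
the wedgepoint. -/
theorem statement17 (n : ℕ) (ls : ℕ → Ordinal) (hmono : StrictMono ls)
    (hcount : ∀ j, (ls j).card ≤ Cardinal.aleph0) (l : Ordinal) (hl : l = ⨆ j, ls j)
    (C : ℕ → Type) [∀ j, TopologicalSpace (C j)] (c : ∀ j, C j)
    (hC : ∀ j, iterWild n (C j) (ls j) = {c j}) :
    iterWild n (ShrinkWedge C c) l = {ShrinkWedge.pt C c} := by
  rw [wedge_invariant ls hmono l hl hC l le_rfl]
  apply Subset.antisymm
  · rintro z (hz | hz)
    · exact hz
    · simp only [mem_iUnion, mem_image, mem_diff, mem_singleton_iff] at hz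
      obtain ⟨j, y, ⟨hyT, hyc⟩, rfl⟩ := hz
      exfalso
      have hlsl : ls j ≤ l := by rw [hl]; exact Ordinal.le_iSup ls j
      have hmem2 : y ∈ iterWild n (C j) (ls j) := iterWild_antitone (C j) hlsl hyT
      rw [hC j] at hmem2
      exact hyc (mem_singleton_iff.mp hmem2)
  · intro z hz
    rw [mem_singleton_iff.mp hz]
    exact pt_mem_Rset l
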